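/- arXiv:1412.1979 — 9 statements merged into one kernel-verified Lean document; each statement's English description precedes it below -/
import Mathlib

section
/- Let (X,d) be a finite nonempty ultrametric space and let Sp(X) = {d(x,y) : x,y ∈ X} be its spectrum. Then |Sp(X)| ≤ |X|. -/
/-- Gomory-Hu inequality: the spectrum of a finite nonempty ultrametric space
has at most as many elements as the space. -/
theorem gomory_hu_inequality {X : Type*} [Fintype X] [Nonempty X]
    (d : X → X → ℝ)
    (hnonneg : ∀ x y, 0 ≤ d x y)
    (hsymm : ∀ x y, d x y = d y x)
    (hzero : ∀ x y, d x y = 0 ↔ x = y)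
    (hultra : ∀ x y z, d x y ≤ max (d x z) (d z y)) :
    (Finset.univ.image (fun p : X × X => d p.1 p.2)).card ≤ Fintype.card X := by
  suffices h : ∀ n (s : Finset X), s.card ≤ n → s.Nonempty →
      ((s ×ˢ s).image fun p : X × X => d p.1 p.2).card ≤ s.card by
    have := h (Fintype.card X) Finset.univ (le_of_eq Finset.card_univ) Finset.univ_nonempty
    simpa [Finset.univ_product_univ, Finset.card_univ] using this
  intro n
  induction n with
  | zero =>
    intro s hs hne
    exact absurd (Finset.card_pos.mpr hne) (by omega)
  | succ n ih =>
    intro s hs hne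
    have hne2 : ((s ×ˢ s).image fun p : X × X => d p.1 p.2).Nonempty :=
      (hne.product hne).image _
    set D := ((s ×ˢ s).image fun p : X × X => d p.1 p.2).max' hne2 with hDdef
    obtain ⟨p, hp, hpD⟩ := Finset.mem_image.mp (Finset.max'_mem _ hne2)
    rw [Finset.mem_product] at hp
    have hbound : ∀ x ∈ s, ∀ y ∈ s, d x y ≤ D := by
      intro x hx y hy
      exact Finset.le_max' _ (d x y) (Finset.mem_image.mpr
        ⟨(x, y), Finset.mem_product.mpr ⟨hx, hy⟩, rfl⟩)
    by_cases hD : 0 < D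
    · -- split s into the strict ball around p.1 of radius D and its complement
      set a := p.1
      set t := s.filter (fun y => d a y < D) with ht
      set u := s.filter (fun y => ¬ d a y < D) with hu
      have hat : a ∈ t := Finset.mem_filter.mpr ⟨hp.1, by
        rw [(hzero a a).mpr rfl]; exact hD⟩
      have hbu : p.2 ∈ u := Finset.mem_filter.mpr ⟨hp.2, by rw [hpD]; exact lt_irrefl D⟩
      have hcard : t.card + u.card = s.card :=
        Finset.card_filter_add_card_filter_not _
      have hts : t ⊆ s := Finset.filter_subset _ _
      have hus : u ⊆ s := Finset.filter_subset _ _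
      have cross : ∀ x ∈ t, ∀ y ∈ u, d x y = D := by
        intro x hx y hy
        obtain ⟨hxs, hxlt⟩ := Finset.mem_filter.mp hx
        obtain ⟨hys, hyge⟩ := Finset.mem_filter.mp hy
        have hyD : d a y = D := le_antisymm (hbound _ hp.1 _ hys) (not_lt.mp hyge)
        refine le_antisymm ?_ ?_
        · refine le_trans (hultra x y a) (max_le ?_ ?_)
          · rw [hsymm x a]; exact le_of_lt hxlt
          · exact le_of_eq hyD
        · by_contra h
          push_neg at h
          have h1 : d a y ≤ max (d a x) (d x y) := hultra a y x
          have h2 : max (d a x) (d x y) < D := max_lt hxlt h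
          rw [hyD] at h1
          linarith
      have hsub : ((s ×ˢ s).image fun p : X × X => d p.1 p.2) ⊆
          insert D (((t ×ˢ t).image fun p : X × X => d p.1 p.2) ∪
            ((u ×ˢ u).image fun p : X × X => d p.1 p.2)) := by
        intro v hv
        obtain ⟨q, hq, rfl⟩ := Finset.mem_image.mp hv
        rw [Finset.mem_product] at hq
        by_cases h1 : d a q.1 < D <;> by_cases h2 : d a q.2 < D
        · refine Finset.mem_insert_of_mem (Finset.mem_union_left _ ?_)
          exact Finset.mem_image.mpr ⟨q, Finset.mem_product.mpr
            ⟨Finset.mem_filter.mpr ⟨hq.1, h1⟩, Finset.mem_filter.mpr ⟨hq.2, h2⟩⟩, rfl⟩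
        · have := cross q.1 (Finset.mem_filter.mpr ⟨hq.1, h1⟩)
            q.2 (Finset.mem_filter.mpr ⟨hq.2, h2⟩)
          rw [this]; exact Finset.mem_insert_self _ _
        · have := cross q.2 (Finset.mem_filter.mpr ⟨hq.2, h2⟩)
            q.1 (Finset.mem_filter.mpr ⟨hq.1, h1⟩)
          rw [hsymm, this]; exact Finset.mem_insert_self _ _
        · refine Finset.mem_insert_of_mem (Finset.mem_union_right _ ?_)
          exact Finset.mem_image.mpr ⟨q, Finset.mem_product.mpr
            ⟨Finset.mem_filter.mpr ⟨hq.1, h1⟩, Finset.mem_filter.mpr ⟨hq.2, h2⟩⟩, rfl⟩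
      set A := ((t ×ˢ t).image fun p : X × X => d p.1 p.2) with hA
      set B := ((u ×ˢ u).image fun p : X × X => d p.1 p.2) with hB
      have hAB : 1 ≤ (A ∩ B).card := by
        refine Finset.card_pos.mpr ⟨0, Finset.mem_inter.mpr ⟨?_, ?_⟩⟩
        · exact Finset.mem_image.mpr ⟨(a, a), Finset.mem_product.mpr ⟨hat, hat⟩,
            (hzero a a).mpr rfl⟩
        · exact Finset.mem_image.mpr ⟨(p.2, p.2), Finset.mem_product.mpr ⟨hbu, hbu⟩,
            (hzero p.2 p.2).mpr rfl⟩
      have hunion : (A ∪ B).card + (A ∩ B).card = A.card + B.card :=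
        Finset.card_union_add_card_inter A B
      have hA' : A.card ≤ t.card := ih t (by
        have : 1 ≤ u.card := Finset.card_pos.mpr ⟨p.2, hbu⟩
        omega) ⟨a, hat⟩
      have hB' : B.card ≤ u.card := ih u (by
        have : 1 ≤ t.card := Finset.card_pos.mpr ⟨a, hat⟩
        omega) ⟨p.2, hbu⟩
      calc ((s ×ˢ s).image fun p : X × X => d p.1 p.2).card
          ≤ (insert D (A ∪ B)).card := Finset.card_le_card hsub
        _ ≤ (A ∪ B).card + 1 := Finset.card_insert_le _ _
        _ ≤ s.card := by omega
    · -- all distances are 0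
      have hsub : ((s ×ˢ s).image fun p : X × X => d p.1 p.2) ⊆ {0} := by
        intro v hv
        obtain ⟨q, hq, rfl⟩ := Finset.mem_image.mp hv
        rw [Finset.mem_product] at hq
        have h1 := hbound _ hq.1 _ hq.2
        have h2 := hnonneg q.1 q.2
        have : d q.1 q.2 = 0 := by push_neg at hD; linarith
        simp [this]
      calc ((s ×ˢ s).image fun p : X × X => d p.1 p.2).card
          ≤ ({0} : Finset ℝ).card := Finset.card_le_card hsub
        _ = 1 := Finset.card_singleton _
        _ ≤ s.card := Finset.card_pos.mpr hne
end

section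
/- Let (X,d) be a finite ultrametric space with |X| ≥ 2 satisfying |Sp(X)| = |X|. Then the diametrical graph G_X^d (on vertex set X, with {u,v} an edge iff d(u,v) = diam X) is a complete bipartite graph: X can be partitioned into two nonempty sets X₁, X₂ such that d(u,v) = diam X holds exactly when u and v lie in different parts; moreover |Sp(X₁)| = |X₁| and |Sp(X₂)| = |X₂|. -/
/-!
Let `D` be the diameter, realised as `D = d p q`. In an ultrametric space the open ball of
radius `D` about `p` and its complement split the space into two parts such that points in
different parts are exactly at distance `D`, while points of the ball are at distance `< D`.
Hence the spectrum of the space is covered by the spectrum of the ball and that of its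
complement together with `D`, the two sharing the value `0`; by induction this gives the
Gomory–Hu bound `|Sp S| ≤ |S|`. If equality holds for the whole space, all the inequalities
in this count are equalities: both parts are extremal and `D` is not a distance inside the
complement, so `d u v = D` happens only across the two parts.
-/

open Finset

section

variable {X : Type*}

structure IsUltrametric (d : X → X → ℝ) : Prop where
  symm : ∀ x y, d x y = d y x
  eq_zero_iff : ∀ x y, d x y = 0 ↔ x = y
  le_max : ∀ x y z, d x y ≤ max (d x z) (d z y)

noncomputable def distSpectrum (d : X → X → ℝ) (S : Finset X) : Finset ℝ :=
  (S ×ˢ S).image fun x => d x.1 x.2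

noncomputable def nearPart (d : X → X → ℝ) (p : X) (r : ℝ) (S : Finset X) : Finset X :=
  S.filter fun x => d p x < r

noncomputable def farPart (d : X → X → ℝ) (p : X) (r : ℝ) (S : Finset X) : Finset X :=
  S.filter fun x => ¬ d p x < r

section Parts

variable {d : X → X → ℝ} {S : Finset X} {p u v : X} {r : ℝ}

theorem mem_distSpectrum {t : ℝ} : t ∈ distSpectrum d S ↔ ∃ u ∈ S, ∃ v ∈ S, d u v = t := by
  simp only [distSpectrum, mem_image, mem_product, Prod.exists, exists_and_left, and_assoc]

theorem dist_mem_distSpectrum (hu : u ∈ S) (hv : v ∈ S) : d u v ∈ distSpectrum d S :=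
  mem_distSpectrum.2 ⟨u, hu, v, hv, rfl⟩

theorem mem_nearPart : u ∈ nearPart d p r S ↔ u ∈ S ∧ d p u < r := mem_filter

theorem mem_farPart : u ∈ farPart d p r S ↔ u ∈ S ∧ ¬ d p u < r := mem_filter

theorem mem_nearPart_or_mem_farPart (hu : u ∈ S) : u ∈ nearPart d p r S ∨ u ∈ farPart d p r S :=
  (em (d p u < r)).imp (fun h => mem_nearPart.2 ⟨hu, h⟩) (fun h => mem_farPart.2 ⟨hu, h⟩)

theorem card_nearPart_add_card_farPart : #(nearPart d p r S) + #(farPart d p r S) = #S :=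
  card_filter_add_card_filter_not _

theorem mem_farPart_of_dist_eq {q : X} (hq : q ∈ S) : q ∈ farPart d p (d p q) S :=
  mem_farPart.2 ⟨hq, lt_irrefl _⟩

end Parts

namespace IsUltrametric

variable {d : X → X → ℝ} {S : Finset X} {p q u v : X} {r : ℝ}

theorem dist_self (hd : IsUltrametric d) (x : X) : d x x = 0 :=
  (hd.eq_zero_iff x x).2 rfl

theorem nonneg (hd : IsUltrametric d) (x y : X) : 0 ≤ d x y := by
  simpa [hd.dist_self, hd.symm y x] using hd.le_max x x y

theorem pos_of_ne (hd : IsUltrametric d) (h : u ≠ v) : 0 < d u v :=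
  (hd.nonneg u v).lt_of_ne fun h0 => h ((hd.eq_zero_iff u v).1 h0.symm)

theorem isosceles (hd : IsUltrametric d) (h : d p u < d p v) : d u v = d p v := by
  have h₁ : d u v ≤ d p v := by
    simpa [hd.symm u p, le_of_lt h] using hd.le_max u v p
  have h₂ : d p v ≤ d u v := (le_max_iff.1 (hd.le_max p v u)).resolve_left (not_le.2 h)
  exact le_antisymm h₁ h₂

theorem zero_mem_distSpectrum (hd : IsUltrametric d) (hu : u ∈ S) : (0 : ℝ) ∈ distSpectrum d S :=
  hd.dist_self u ▸ dist_mem_distSpectrum hu hu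

theorem distSpectrum_singleton (hd : IsUltrametric d) (x : X) : distSpectrum d {x} = {0} := by
  simp [distSpectrum, hd.dist_self]

theorem mem_nearPart_self (hd : IsUltrametric d) (hp : p ∈ S) (hr : 0 < r) :
    p ∈ nearPart d p r S :=
  mem_nearPart.2 ⟨hp, by rwa [hd.dist_self]⟩

theorem exists_diametrical_pair (hd : IsUltrametric d) (hS : S.Nontrivial) :
    ∃ p ∈ S, ∃ q ∈ S, 0 < d p q ∧ ∀ u ∈ S, ∀ v ∈ S, d u v ≤ d p q := by
  obtain ⟨a, ha, b, hb, hab⟩ := hS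
  have hne : (S ×ˢ S).Nonempty := ⟨(a, b), mem_product.2 ⟨ha, hb⟩⟩
  obtain ⟨⟨p, q⟩, hpq, hmax⟩ := exists_mem_eq_sup' hne fun x => d x.1 x.2
  have hle : ∀ u ∈ S, ∀ v ∈ S, d u v ≤ d p q := fun u hu v hv =>
    hmax ▸ le_sup' (fun x : X × X => d x.1 x.2) (b := (u, v)) (mem_product.2 ⟨hu, hv⟩)
  exact ⟨p, (mem_product.1 hpq).1, q, (mem_product.1 hpq).2,
    (hd.pos_of_ne hab).trans_le (hle a ha b hb), hle⟩

theorem dist_lt_of_mem_nearPart (hd : IsUltrametric d) (hu : u ∈ nearPart d p r S)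
    (hv : v ∈ nearPart d p r S) : d u v < r :=
  calc d u v ≤ max (d u p) (d p v) := hd.le_max u v p
    _ < r := max_lt (hd.symm u p ▸ (mem_nearPart.1 hu).2) (mem_nearPart.1 hv).2

theorem dist_eq_of_mem_nearPart_of_mem_farPart (hd : IsUltrametric d) (hS : ∀ x ∈ S, d p x ≤ r)
    (hu : u ∈ nearPart d p r S) (hv : v ∈ farPart d p r S) : d u v = r := by
  obtain ⟨hvS, hv⟩ := mem_farPart.1 hv
  have hpv : d p v = r := le_antisymm (hS v hvS) (not_lt.1 hv)
  rw [hd.isosceles (hpv ▸ (mem_nearPart.1 hu).2), hpv]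

theorem distSpectrum_subset (hd : IsUltrametric d) (hS : ∀ x ∈ S, d p x ≤ r) :
    distSpectrum d S ⊆
      distSpectrum d (nearPart d p r S) ∪ insert r (distSpectrum d (farPart d p r S)) := by
  intro t ht
  obtain ⟨u, hu, v, hv, rfl⟩ := mem_distSpectrum.1 ht
  rcases mem_nearPart_or_mem_farPart hu with hu | hu <;>
    rcases mem_nearPart_or_mem_farPart hv with hv | hv
  · exact mem_union_left _ (dist_mem_distSpectrum hu hv)
  · rw [hd.dist_eq_of_mem_nearPart_of_mem_farPart hS hu hv]
    exact mem_union_right _ (mem_insert_self _ _)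
  · rw [hd.symm, hd.dist_eq_of_mem_nearPart_of_mem_farPart hS hv hu]
    exact mem_union_right _ (mem_insert_self _ _)
  · exact mem_union_right _ (mem_insert_of_mem (dist_mem_distSpectrum hu hv))

theorem card_distSpectrum_add_one_le (hd : IsUltrametric d) (hS : ∀ x ∈ S, d p x ≤ r)
    (hnear : (nearPart d p r S).Nonempty) (hfar : (farPart d p r S).Nonempty) :
    #(distSpectrum d S) + 1 ≤
      #(distSpectrum d (nearPart d p r S)) + #(insert r (distSpectrum d (farPart d p r S))) := by
  obtain ⟨a, ha⟩ := hnear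
  obtain ⟨b, hb⟩ := hfar
  have hzero : (0 : ℝ) ∈ distSpectrum d (nearPart d p r S) ∩
      insert r (distSpectrum d (farPart d p r S)) :=
    mem_inter.2 ⟨hd.zero_mem_distSpectrum ha, mem_insert_of_mem (hd.zero_mem_distSpectrum hb)⟩
  calc #(distSpectrum d S) + 1
      ≤ #(distSpectrum d (nearPart d p r S) ∪ insert r (distSpectrum d (farPart d p r S))) +
        #(distSpectrum d (nearPart d p r S) ∩ insert r (distSpectrum d (farPart d p r S))) :=
        add_le_add (card_le_card (hd.distSpectrum_subset hS)) (card_pos.2 ⟨0, hzero⟩)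
    _ = _ := card_union_add_card_inter _ _

/-- The Gomory–Hu inequality. -/
theorem card_distSpectrum_le (hd : IsUltrametric d) (S : Finset X) (hS : S.Nonempty) :
    #(distSpectrum d S) ≤ #S := by
  induction S using Finset.strongInduction with
  | H S ih =>
  rcases hS.exists_eq_singleton_or_nontrivial with ⟨x, rfl⟩ | hS
  · simp [hd.distSpectrum_singleton]
  obtain ⟨p, hp, q, hq, hpq, hdiam⟩ := hd.exists_diametrical_pair hS
  have hnear := hd.mem_nearPart_self hp hpq
  have hfar : q ∈ farPart d p (d p q) S := mem_farPart_of_dist_eq hq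
  have h₁ := ih (nearPart d p (d p q) S) (filter_ssubset.2 ⟨q, hq, lt_irrefl _⟩) ⟨p, hnear⟩
  have h₂ := ih (farPart d p (d p q) S)
    (filter_ssubset.2 ⟨p, hp, not_not.2 (by rwa [hd.dist_self])⟩) ⟨q, hfar⟩
  have hsplit := hd.card_distSpectrum_add_one_le (hdiam p hp) ⟨p, hnear⟩ ⟨q, hfar⟩
  have hinsert := card_insert_le (d p q) (distSpectrum d (farPart d p (d p q) S))
  have hcard := card_nearPart_add_card_farPart (d := d) (p := p) (r := d p q) (S := S)
  omega

theorem card_distSpectrum_parts_of_extremal (hd : IsUltrametric d) (hp : p ∈ S) (hq : q ∈ S)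
    (hpq : 0 < d p q) (hdiam : ∀ u ∈ S, ∀ v ∈ S, d u v ≤ d p q)
    (hext : #(distSpectrum d S) = #S) :
    #(distSpectrum d (nearPart d p (d p q) S)) = #(nearPart d p (d p q) S) ∧
      #(distSpectrum d (farPart d p (d p q) S)) = #(farPart d p (d p q) S) ∧
      d p q ∉ distSpectrum d (farPart d p (d p q) S) := by
  have hnear := hd.mem_nearPart_self hp hpq
  have hfar : q ∈ farPart d p (d p q) S := mem_farPart_of_dist_eq hq
  have hsplit := hd.card_distSpectrum_add_one_le (hdiam p hp) ⟨p, hnear⟩ ⟨q, hfar⟩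
  have h₁ := hd.card_distSpectrum_le _ ⟨p, hnear⟩
  have h₂ := hd.card_distSpectrum_le _ ⟨q, hfar⟩
  have hinsert := card_insert_le (d p q) (distSpectrum d (farPart d p (d p q) S))
  have hcard := card_nearPart_add_card_farPart (d := d) (p := p) (r := d p q) (S := S)
  refine ⟨by omega, by omega, fun hmem => ?_⟩
  rw [card_insert_of_mem hmem] at hsplit
  omega

theorem dist_eq_iff_of_notMem_distSpectrum_farPart (hd : IsUltrametric d)
    (hS : ∀ x ∈ S, d p x ≤ r) (hr : r ∉ distSpectrum d (farPart d p r S)) (hu : u ∈ S)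
    (hv : v ∈ S) :
    d u v = r ↔ (u ∈ nearPart d p r S ∧ v ∈ farPart d p r S) ∨
      (u ∈ farPart d p r S ∧ v ∈ nearPart d p r S) := by
  constructor
  · intro huv
    rcases mem_nearPart_or_mem_farPart (p := p) (r := r) hu with hu | hu <;>
      rcases mem_nearPart_or_mem_farPart (p := p) (r := r) hv with hv | hv
    · exact absurd huv (hd.dist_lt_of_mem_nearPart hu hv).ne
    · exact Or.inl ⟨hu, hv⟩
    · exact Or.inr ⟨hu, hv⟩
    · have h := dist_mem_distSpectrum (d := d) hu hv
      rw [huv] at h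
      exact absurd h hr
  · rintro (⟨hu, hv⟩ | ⟨hu, hv⟩)
    · exact hd.dist_eq_of_mem_nearPart_of_mem_farPart hS hu hv
    · rw [hd.symm]
      exact hd.dist_eq_of_mem_nearPart_of_mem_farPart hS hv hu

end IsUltrametric

end

theorem diametrical_graph_bipartite_general {X : Type*} [Fintype X] [Nonempty X] [DecidableEq X]
    (d : X → X → ℝ)
    (hcard : 2 ≤ Fintype.card X)
    (hsymm : ∀ x y, d x y = d y x)
    (hzero : ∀ x y, d x y = 0 ↔ x = y)
    (hultra : ∀ x y z, d x y ≤ max (d x z) (d z y))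
    (hext : (Finset.univ.image (fun p : X × X => d p.1 p.2)).card = Fintype.card X) :
    ∃ X₁ X₂ : Finset X, X₁.Nonempty ∧ X₂.Nonempty ∧
      X₁ ∪ X₂ = Finset.univ ∧ X₁ ∩ X₂ = ∅ ∧
      (∀ u v : X,
        d u v = Finset.univ.sup' Finset.univ_nonempty (fun p : X × X => d p.1 p.2) ↔
          ((u ∈ X₁ ∧ v ∈ X₂) ∨ (u ∈ X₂ ∧ v ∈ X₁))) ∧
      ((X₁ ×ˢ X₁).image (fun p => d p.1 p.2)).card = X₁.card ∧
      ((X₂ ×ˢ X₂).image (fun p => d p.1 p.2)).card = X₂.card := by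
  have hd : IsUltrametric d := ⟨hsymm, hzero, hultra⟩
  have hX : (univ : Finset X).Nontrivial := one_lt_card_iff_nontrivial.1 (by rw [card_univ]; omega)
  obtain ⟨p, hp, q, hq, hpq, hdiam⟩ := hd.exists_diametrical_pair hX
  have hsup : univ.sup' univ_nonempty (fun x : X × X => d x.1 x.2) = d p q :=
    le_antisymm (sup'_le _ _ fun x _ => hdiam x.1 (mem_univ _) x.2 (mem_univ _))
      (le_sup' (fun x : X × X => d x.1 x.2) (mem_univ (p, q)))
  have hext' : #(distSpectrum d univ) = #(univ : Finset X) := by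
    rwa [distSpectrum, univ_product_univ, card_univ]
  obtain ⟨hnear, hfar, hD⟩ := hd.card_distSpectrum_parts_of_extremal hp hq hpq hdiam hext'
  refine ⟨nearPart d p (d p q) univ, farPart d p (d p q) univ, ⟨p, hd.mem_nearPart_self hp hpq⟩,
    ⟨q, mem_farPart_of_dist_eq hq⟩, filter_union_filter_not_eq _ _,
    disjoint_iff_inter_eq_empty.1 (disjoint_filter_filter_not _ _ _), fun u v => ?_, hnear, hfar⟩
  rw [hsup]
  exact hd.dist_eq_iff_of_notMem_distSpectrum_farPart (hdiam p hp) hD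
    (mem_univ u) (mem_univ v)

/-- If a finite ultrametric space with at least two points is extremal for the
Gomory-Hu inequality, then its diametrical graph is complete bipartite and
both parts are extremal. -/
theorem diametrical_graph_bipartite {X : Type*} [Fintype X] [Nonempty X] [DecidableEq X]
    (d : X → X → ℝ)
    (hcard : 2 ≤ Fintype.card X)
    (hnonneg : ∀ x y, 0 ≤ d x y)
    (hsymm : ∀ x y, d x y = d y x)
    (hzero : ∀ x y, d x y = 0 ↔ x = y)
    (hultra : ∀ x y z, d x y ≤ max (d x z) (d z y))
    (hext : (Finset.univ.image (fun p : X × X => d p.1 p.2)).card = Fintype.card X) :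
    ∃ X₁ X₂ : Finset X, X₁.Nonempty ∧ X₂.Nonempty ∧
      X₁ ∪ X₂ = Finset.univ ∧ X₁ ∩ X₂ = ∅ ∧
      (∀ u v : X,
        d u v = Finset.univ.sup' Finset.univ_nonempty (fun p : X × X => d p.1 p.2) ↔
          ((u ∈ X₁ ∧ v ∈ X₂) ∨ (u ∈ X₂ ∧ v ∈ X₁))) ∧
      ((X₁ ×ˢ X₁).image (fun p => d p.1 p.2)).card = X₁.card ∧
      ((X₂ ×ˢ X₂).image (fun p => d p.1 p.2)).card = X₂.card :=
  diametrical_graph_bipartite_general d hcard hsymm hzero hultra hext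
end

section
/- Let (X,d) be a finite ultrametric space with |X| ≥ 2 and |Sp(X)| = |X|, and let X = X₁ ∪ X₂ be the bipartition of the diametrical graph G_X^d (so d(u,v) = diam X iff u,v lie in different parts). Then Sp(X₁) ∩ Sp(X₂) = {0}. -/
open Finset

private theorem sp_card_le {X : Type*} [DecidableEq X] (d : X → X → ℝ)
    (hnonneg : ∀ x y, 0 ≤ d x y)
    (hzero : ∀ x y, d x y = 0 ↔ x = y)
    (hsymm : ∀ x y, d x y = d y x)
    (hultra : ∀ x y z, d x y ≤ max (d x z) (d z y))
    (A : Finset X) (hA : A.Nonempty) :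
    ((A ×ˢ A).image (fun p => d p.1 p.2)).card ≤ A.card := by
  classical
  set sp := (A ×ˢ A).image (fun p => d p.1 p.2) with hsp
  set B : ℝ → X → Finset X := fun r x => A.filter (fun y => d x y ≤ r) with hB
  set N : ℝ → ℕ := fun r => (A.image (B r)).card with hN
  have ball_eq : ∀ r x y, d x y ≤ r → B r x = B r y := by
    intro r x y hxy
    ext z
    simp only [hB, mem_filter, and_congr_right_iff]
    intro _
    constructor
    · intro h
      exact le_trans (hultra y z x) (max_le (by rw [hsymm]; exact hxy) h)
    · intro h
      exact le_trans (hultra x z y) (max_le hxy h)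
  have hsp_prop : ∀ r ∈ sp, 0 ≤ r ∧ ∃ a ∈ A, ∃ b ∈ A, d a b = r := by
    intro r hr
    obtain ⟨⟨a, b⟩, hab, habd⟩ := mem_image.mp hr
    obtain ⟨ha, hb⟩ := mem_product.mp hab
    exact ⟨habd ▸ hnonneg a b, a, ha, b, hb, habd⟩
  have strict : ∀ r₁ r₂ : ℝ, 0 ≤ r₁ → r₁ < r₂ →
      (∃ a ∈ A, ∃ b ∈ A, d a b = r₂) → N r₂ < N r₁ := by
    rintro r₁ r₂ h0 hlt ⟨a, ha, b, hb, hab⟩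
    set f : Finset X → Finset X := fun s => A.filter (fun y => ∃ x ∈ s, d x y ≤ r₂) with hf
    have h1 : ∀ x ∈ A, f (B r₁ x) = B r₂ x := by
      intro x hx
      ext y
      simp only [hf, hB, mem_filter]
      constructor
      · rintro ⟨hy, z, ⟨hz, hz1⟩, hz2⟩
        exact ⟨hy, le_trans (hultra x y z) (max_le (le_trans hz1 hlt.le) hz2)⟩
      · rintro ⟨hy, h⟩
        exact ⟨hy, x, ⟨hx, by rw [(hzero x x).mpr rfl]; exact h0⟩, h⟩
    have h2 : A.image (B r₂) = (A.image (B r₁)).image f := by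
      rw [Finset.image_image]
      exact Finset.image_congr (fun x hx => (h1 x hx).symm)
    have hle : ((A.image (B r₁)).image f).card ≤ (A.image (B r₁)).card :=
      Finset.card_image_le
    rcases lt_or_eq_of_le hle with h | h
    · simpa only [hN, h2] using h
    · exfalso
      have hinj := Finset.injOn_of_card_image_eq h
      have hBa : B r₁ a ∈ A.image (B r₁) := mem_image_of_mem _ ha
      have hBb : B r₁ b ∈ A.image (B r₁) := mem_image_of_mem _ hb
      have hfeq : f (B r₁ a) = f (B r₁ b) := by
        rw [h1 a ha, h1 b hb]
        exact ball_eq r₂ a b (le_of_eq hab)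
      have hBeq : B r₁ a = B r₁ b := hinj hBa hBb hfeq
      have hbmem : b ∈ B r₁ b := by
        simp only [hB, mem_filter]
        exact ⟨hb, by rw [(hzero b b).mpr rfl]; exact h0⟩
      rw [← hBeq] at hbmem
      simp only [hB, mem_filter] at hbmem
      exact absurd hbmem.2 (by rw [hab]; exact not_le.mpr hlt)
  have h0mem : (0 : ℝ) ∈ sp := by
    obtain ⟨x, hx⟩ := hA
    exact mem_image.mpr ⟨(x, x), mem_product.mpr ⟨hx, hx⟩, (hzero x x).mpr rfl⟩
  have hAcard : 1 ≤ A.card := Finset.card_pos.mpr hA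
  have hmaps : ∀ r ∈ sp.erase 0, N r ∈ Finset.Icc 1 (A.card - 1) := by
    intro r hr
    obtain ⟨hr0, hrsp⟩ := Finset.mem_erase.mp hr
    obtain ⟨hrnn, a, ha, b, hb, habd⟩ := hsp_prop r hrsp
    have hane : a ≠ b := by
      intro h
      exact hr0 (by rw [← habd]; exact (hzero a b).mpr h)
    have h1 : 1 ≤ N r := by
      have : (A.image (B r)).Nonempty := hA.image _
      exact Finset.card_pos.mpr this
    have h2 : N r < A.card := by
      have hle : (A.image (B r)).card ≤ A.card := Finset.card_image_le
      rcases lt_or_eq_of_le hle with h | h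
      · exact h
      · exfalso
        have hinj := Finset.injOn_of_card_image_eq h
        exact hane (hinj ha hb (ball_eq r a b (le_of_eq habd)))
    exact Finset.mem_Icc.mpr ⟨h1, Nat.le_sub_one_of_lt h2⟩
  have hinjN : Set.InjOn N (sp.erase 0) := by
    intro r₁ h₁ r₂ h₂ hEq
    by_contra hne
    obtain ⟨hr₁nn, _⟩ := hsp_prop r₁ (Finset.mem_of_mem_erase h₁)
    obtain ⟨hr₂nn, hex₂⟩ := hsp_prop r₂ (Finset.mem_of_mem_erase h₂)
    obtain ⟨_, hex₁⟩ := hsp_prop r₁ (Finset.mem_of_mem_erase h₁)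
    rcases lt_or_gt_of_ne hne with h | h
    · exact absurd hEq (ne_of_gt (strict r₁ r₂ hr₁nn h hex₂))
    · exact absurd hEq (ne_of_lt (strict r₂ r₁ hr₂nn h hex₁))
  have hcard_erase : (sp.erase 0).card ≤ A.card - 1 := by
    have := Finset.card_le_card_of_injOn N hmaps hinjN
    simpa [Nat.card_Icc] using this
  have : sp.card = (sp.erase 0).card + 1 := by
    rw [Finset.card_erase_of_mem h0mem]
    have : 1 ≤ sp.card := Finset.card_pos.mpr ⟨0, h0mem⟩
    omega
  omega

/-- For an extremal finite ultrametric space with bipartite diametrical graph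
with parts `X₁`, `X₂`, the spectra of the two parts intersect exactly in `{0}`. -/
theorem spectra_of_parts_intersect_in_zero {X : Type*} [Fintype X] [Nonempty X] [DecidableEq X]
    (d : X → X → ℝ)
    (hcard : 2 ≤ Fintype.card X)
    (hnonneg : ∀ x y, 0 ≤ d x y)
    (hsymm : ∀ x y, d x y = d y x)
    (hzero : ∀ x y, d x y = 0 ↔ x = y)
    (hultra : ∀ x y z, d x y ≤ max (d x z) (d z y))
    (hext : (Finset.univ.image (fun p : X × X => d p.1 p.2)).card = Fintype.card X)
    (X₁ X₂ : Finset X)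
    (hne₁ : X₁.Nonempty) (hne₂ : X₂.Nonempty)
    (hunion : X₁ ∪ X₂ = Finset.univ) (hinter : X₁ ∩ X₂ = ∅)
    (hbip : ∀ u v : X,
      d u v = Finset.univ.sup' Finset.univ_nonempty (fun p : X × X => d p.1 p.2) ↔
        ((u ∈ X₁ ∧ v ∈ X₂) ∨ (u ∈ X₂ ∧ v ∈ X₁))) :
    ((X₁ ×ˢ X₁).image (fun p => d p.1 p.2)) ∩
      ((X₂ ×ˢ X₂).image (fun p => d p.1 p.2)) = {(0 : ℝ)} := by
  classical
  set D := Finset.univ.sup' Finset.univ_nonempty (fun p : X × X => d p.1 p.2) with hD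
  set Sp := (Finset.univ : Finset (X × X)).image (fun p => d p.1 p.2) with hSpdef
  set Sp₁ := (X₁ ×ˢ X₁).image (fun p : X × X => d p.1 p.2) with hSp₁def
  set Sp₂ := (X₂ ×ˢ X₂).image (fun p : X × X => d p.1 p.2) with hSp₂def
  have hdisj : Disjoint X₁ X₂ := Finset.disjoint_iff_inter_eq_empty.mpr hinter
  have hcards : X₁.card + X₂.card = Fintype.card X := by
    rw [← Finset.card_union_of_disjoint hdisj, hunion, Finset.card_univ]
  have hnotinter : ∀ x : X, x ∈ X₁ → x ∈ X₂ → False := by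
    intro x h1 h2
    have : x ∈ X₁ ∩ X₂ := Finset.mem_inter.mpr ⟨h1, h2⟩
    rw [hinter] at this
    exact Finset.notMem_empty x this
  have hDnot₁ : D ∉ Sp₁ := by
    intro h
    obtain ⟨⟨u, v⟩, huv, hduv⟩ := mem_image.mp h
    obtain ⟨hu, hv⟩ := mem_product.mp huv
    rcases (hbip u v).mp hduv with ⟨_, hv2⟩ | ⟨hu2, _⟩
    · exact hnotinter v hv hv2
    · exact hnotinter u hu hu2
  have hDnot₂ : D ∉ Sp₂ := by
    intro h
    obtain ⟨⟨u, v⟩, huv, hduv⟩ := mem_image.mp h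
    obtain ⟨hu, hv⟩ := mem_product.mp huv
    rcases (hbip u v).mp hduv with ⟨hu1, _⟩ | ⟨_, hv1⟩
    · exact hnotinter u hu1 hu
    · exact hnotinter v hv1 hv
  have hmemU : ∀ x : X, x ∈ X₁ ∪ X₂ := fun x => hunion ▸ Finset.mem_univ x
  have hSpsub : ∀ u v : X, d u v ∈ Sp := by
    intro u v
    exact mem_image.mpr ⟨(u, v), Finset.mem_univ _, rfl⟩
  have hunionSp : Sp = (Sp₁ ∪ Sp₂) ∪ {D} := by
    ext r
    constructor
    · intro hr
      obtain ⟨⟨u, v⟩, _, hduv⟩ := mem_image.mp hr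
      rcases Finset.mem_union.mp (hmemU u) with hu1 | hu2 <;>
        rcases Finset.mem_union.mp (hmemU v) with hv1 | hv2
      · exact Finset.mem_union.mpr (Or.inl (Finset.mem_union.mpr (Or.inl
          (mem_image.mpr ⟨(u, v), mem_product.mpr ⟨hu1, hv1⟩, hduv⟩))))
      · refine Finset.mem_union.mpr (Or.inr ?_)
        rw [Finset.mem_singleton, ← hduv]
        exact (hbip u v).mpr (Or.inl ⟨hu1, hv2⟩)
      · refine Finset.mem_union.mpr (Or.inr ?_)
        rw [Finset.mem_singleton, ← hduv]
        exact (hbip u v).mpr (Or.inr ⟨hu2, hv1⟩)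
      · exact Finset.mem_union.mpr (Or.inl (Finset.mem_union.mpr (Or.inr
          (mem_image.mpr ⟨(u, v), mem_product.mpr ⟨hu2, hv2⟩, hduv⟩))))
    · intro hr
      rcases Finset.mem_union.mp hr with hr | hr
      · rcases Finset.mem_union.mp hr with hr | hr
        · obtain ⟨⟨u, v⟩, _, hduv⟩ := mem_image.mp hr
          exact hduv ▸ hSpsub u v
        · obtain ⟨⟨u, v⟩, _, hduv⟩ := mem_image.mp hr
          exact hduv ▸ hSpsub u v
      · rw [Finset.mem_singleton] at hr
        subst hr
        obtain ⟨p, _, hp⟩ := Finset.exists_mem_eq_sup' (Finset.univ_nonempty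
          (α := X × X)) (fun p : X × X => d p.1 p.2)
        rw [hD, hp]
        exact hSpsub p.1 p.2
  have hDnotU : D ∉ Sp₁ ∪ Sp₂ := by
    intro h
    rcases Finset.mem_union.mp h with h | h
    · exact hDnot₁ h
    · exact hDnot₂ h
  have hcardU : (Sp₁ ∪ Sp₂).card + 1 = Fintype.card X := by
    rw [← hext, hunionSp,
      Finset.card_union_of_disjoint (Finset.disjoint_singleton_right.mpr hDnotU),
      Finset.card_singleton]
  have hle₁ : Sp₁.card ≤ X₁.card :=
    sp_card_le d hnonneg hzero hsymm hultra X₁ hne₁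
  have hle₂ : Sp₂.card ≤ X₂.card :=
    sp_card_le d hnonneg hzero hsymm hultra X₂ hne₂
  have h0₁ : (0 : ℝ) ∈ Sp₁ := by
    obtain ⟨x, hx⟩ := hne₁
    exact mem_image.mpr ⟨(x, x), mem_product.mpr ⟨hx, hx⟩, (hzero x x).mpr rfl⟩
  have h0₂ : (0 : ℝ) ∈ Sp₂ := by
    obtain ⟨x, hx⟩ := hne₂
    exact mem_image.mpr ⟨(x, x), mem_product.mpr ⟨hx, hx⟩, (hzero x x).mpr rfl⟩
  ext r
  simp only [Finset.mem_inter, Finset.mem_singleton]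
  constructor
  · rintro ⟨hr₁, hr₂⟩
    by_contra hr0
    have h2sub : ({(0 : ℝ), r} : Finset ℝ) ⊆ Sp₁ ∩ Sp₂ := by
      intro s hs
      rcases Finset.mem_insert.mp hs with rfl | hs
      · exact Finset.mem_inter.mpr ⟨h0₁, h0₂⟩
      · rw [Finset.mem_singleton] at hs
        subst hs
        exact Finset.mem_inter.mpr ⟨hr₁, hr₂⟩
    have h2 : 2 ≤ (Sp₁ ∩ Sp₂).card := by
      have hc : ({(0 : ℝ), r} : Finset ℝ).card = 2 := by
        rw [Finset.card_insert_of_notMem (by simpa using Ne.symm hr0),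
          Finset.card_singleton]
      rw [← hc]
      exact Finset.card_le_card h2sub
    have hUI := Finset.card_union_add_card_inter Sp₁ Sp₂
    omega
  · rintro rfl
    exact ⟨h0₁, h0₂⟩
end

section
/- Let (X,d) be a finite ultrametric space with |X| ≥ 3 such that there exists a Hamiltonian path x₁,...,xₙ through X whose consecutive distances d(xᵢ, xᵢ₊₁) are pairwise distinct and positive. Then the Hamiltonian cycle x₁,...,xₙ,x₁ has the property that d(xₙ, x₁) equals the maximum of the consecutive distances d(xᵢ, xᵢ₊₁), 1 ≤ i ≤ n−1. -/
private lemma foldr_max_le_of (L : List ℝ) (M : ℝ) (hM : 0 ≤ M)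
    (h : ∀ x ∈ L, x ≤ M) : L.foldr max 0 ≤ M := by
  induction L with
  | nil => simpa using hM
  | cons a t ih =>
    simp only [List.foldr_cons]
    exact max_le (h a (by simp)) (ih fun x hx => h x (by simp [hx]))

private lemma foldr_max_lt_of (L : List ℝ) (M : ℝ) (hM : 0 < M)
    (h : ∀ x ∈ L, x < M) : L.foldr max 0 < M := by
  induction L with
  | nil => simpa using hM
  | cons a t ih =>
    simp only [List.foldr_cons]
    exact max_lt (h a (by simp)) (ih fun x hx => h x (by simp [hx]))

private lemma le_foldr_max (L : List ℝ) (x : ℝ) (hx : x ∈ L) : x ≤ L.foldr max 0 := by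
  induction L with
  | nil => simp at hx
  | cons a t ih =>
    simp only [List.foldr_cons]
    rcases List.mem_cons.1 hx with h | h
    · exact h ▸ le_max_left _ _
    · exact le_trans (ih h) (le_max_right _ _)

private lemma foldr_max_mem (L : List ℝ) (hne : L ≠ [])
    (hpos : ∀ x ∈ L, 0 < x) : L.foldr max 0 ∈ L := by
  induction L with
  | nil => exact absurd rfl hne
  | cons a t ih =>
    simp only [List.foldr_cons]
    rcases eq_or_ne t [] with rfl | ht
    · simp [le_of_lt (hpos a (by simp))]
    · rcases max_choice a (t.foldr max 0) with h | h
      · simp [h]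
      · rw [h]
        exact List.mem_cons_of_mem _ (ih ht (fun x hx => hpos x (by simp [hx])))

private lemma ultra_chain {X : Type*} (d : X → X → ℝ)
    (hzero : ∀ x, d x x = 0)
    (hultra : ∀ x y z, d x y ≤ max (d x z) (d z y))
    (l : List X) (B : ℝ) (hB : 0 ≤ B) :
    ∀ (n i j : ℕ) (hij : i ≤ j) (hj : j < l.length), j - i = n →
    (∀ t, i ≤ t → (ht : t < j) → d (l[t]'(by omega)) (l[t+1]'(by omega)) ≤ B) →
    d (l[i]'(by omega)) (l[j]'hj) ≤ B := by
  intro n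
  induction n with
  | zero =>
    intro i j hij hj hn he
    have : i = j := by omega
    subst this
    simp [hzero, hB]
  | succ m ih =>
    intro i j hij hj hn he
    have hij' : i < j := by omega
    have h1 : d (l[i]'(by omega)) (l[j]'hj) ≤
        max (d (l[i]'(by omega)) (l[i+1]'(by omega))) (d (l[i+1]'(by omega)) (l[j]'hj)) :=
      hultra _ _ _
    refine le_trans h1 (max_le (he i le_rfl hij')
      (ih (i+1) j (by omega) hj (by omega) (fun t ht1 ht2 => he t (by omega) ht2)))

/-- If a Hamiltonian path in a finite ultrametric space with at least 3 points
has pairwise distinct positive consecutive distances, then the closing distance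
(from the last point back to the first) equals the maximum of the consecutive
distances along the path. -/
theorem closing_edge_is_maximal {X : Type*} [Fintype X]
    (d : X → X → ℝ)
    (hcard : 3 ≤ Fintype.card X)
    (hnonneg : ∀ x y, 0 ≤ d x y)
    (hsymm : ∀ x y, d x y = d y x)
    (hzero : ∀ x y, d x y = 0 ↔ x = y)
    (hultra : ∀ x y z, d x y ≤ max (d x z) (d z y))
    (l : List X) (hne : l ≠ [])
    (hnd : l.Nodup) (hall : ∀ x : X, x ∈ l)
    (hdistinct : ((l.zip l.tail).map (fun p => d p.1 p.2)).Nodup)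
    (hpos : ∀ r ∈ (l.zip l.tail).map (fun p => d p.1 p.2), (0 : ℝ) < r) :
    d (l.getLast hne) (l.head hne) ∈ (l.zip l.tail).map (fun p => d p.1 p.2) ∧
    ∀ r ∈ (l.zip l.tail).map (fun p => d p.1 p.2),
      r ≤ d (l.getLast hne) (l.head hne) := by
  classical
  have hzero' : ∀ x, d x x = 0 := fun x => (hzero x x).mpr rfl
  set E := ((l.zip l.tail).map (fun p => d p.1 p.2)) with hEdef
  -- length of l
  have hlcard : l.length = Fintype.card X := by
    rw [← List.toFinset_card_of_nodup hnd]
    congr 1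
    apply Finset.eq_univ_iff_forall.mpr
    intro x; simpa using hall x
  have hn3 : 3 ≤ l.length := hlcard ▸ hcard
  have hElen : E.length = l.length - 1 := by
    simp [hEdef, List.length_zip, List.length_tail]
  have hE : ∀ (t : ℕ) (ht : t < E.length),
      E[t] = d (l[t]'(by omega)) (l[t+1]'(by rw [hElen] at ht; omega)) := by
    intro t ht
    simp [hEdef, List.getElem_map, List.getElem_zip, List.getElem_tail]
  -- maximum edge
  have hEne : E ≠ [] := by
    intro h
    rw [h] at hElen
    simp at hElen
    omega
  set M : ℝ := E.foldr max 0 with hMdef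
  have hMmem : M ∈ E := foldr_max_mem E hEne hpos
  have hMpos : 0 < M := hpos M hMmem
  have hleM : ∀ r ∈ E, r ≤ M := fun r hr => le_foldr_max E r hr
  obtain ⟨k, hk, hkE⟩ := List.mem_iff_getElem.1 hMmem
  have hklt : k < l.length - 1 := hElen ▸ hk
  -- strictness for other edges
  have hstrict : ∀ (t : ℕ) (ht : t < E.length), t ≠ k → E[t] < M := by
    intro t ht htk
    refine lt_of_le_of_ne (hleM _ (List.getElem_mem ht)) ?_
    intro h
    exact htk ((hdistinct.getElem_inj_iff).1 (h.trans hkE.symm))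
  -- rewrite the goal
  rw [List.getLast_eq_getElem, List.head_eq_getElem]
  set D : ℝ := d (l[l.length - 1]'(by omega)) (l[0]'(by omega)) with hDdef
  -- D ≤ M by the chain along the whole path
  have hDM : D ≤ M := by
    have := ultra_chain d hzero' hultra l M (le_of_lt hMpos)
      (l.length - 1) 0 (l.length - 1) (by omega) (by omega) rfl
      (fun t ht1 ht2 => by
        have htE : t < E.length := by omega
        have := hE t htE
        rw [← this]
        exact hleM _ (List.getElem_mem htE))
    rw [hDdef, hsymm]
    exact this
  -- M ≤ D by contradiction
  have hMD : M ≤ D := by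
    by_contra hlt
    push_neg at hlt
    -- bound B strictly below M dominating D and all other edges
    set L : List ℝ := ((List.range E.length).filter (fun t => t ≠ k)).map
      (fun t => E.getD t 0) with hLdef
    set B : ℝ := max D (L.foldr max 0) with hBdef
    have hBlt : B < M := by
      refine max_lt hlt (foldr_max_lt_of L M hMpos ?_)
      intro x hx
      rw [hLdef] at hx
      obtain ⟨t, htmem, rfl⟩ := List.mem_map.1 hx
      have ht := List.mem_filter.1 htmem
      have ht1 : t < E.length := List.mem_range.1 ht.1
      have ht2 : t ≠ k := by simpa using ht.2
      rw [List.getD_eq_getElem E 0 ht1]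
      exact hstrict t ht1 ht2
    have hB0 : 0 ≤ B := le_trans (hnonneg _ _) (le_max_left _ _)
    have hedgeB : ∀ (t : ℕ) (ht : t < E.length), t ≠ k → E[t] ≤ B := by
      intro t ht htk
      have hmem : E.getD t 0 ∈ L := by
        rw [hLdef]
        exact List.mem_map.2 ⟨t, List.mem_filter.2 ⟨List.mem_range.2 ht, by simpa using htk⟩, rfl⟩
      have := le_foldr_max L _ hmem
      rw [List.getD_eq_getElem E 0 ht] at this
      exact le_trans this (le_max_right _ _)
    -- chain from 0 to k
    have hchain1 : d (l[0]'(by omega)) (l[k]'(by omega)) ≤ B := by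
      refine ultra_chain d hzero' hultra l B hB0 k 0 k (by omega) (by omega) rfl ?_
      intro t ht1 ht2
      have htE : t < E.length := by omega
      rw [← hE t htE]
      exact hedgeB t htE (by omega)
    -- chain from k+1 to length-1
    have hchain2 : d (l[k+1]'(by omega)) (l[l.length - 1]'(by omega)) ≤ B := by
      refine ultra_chain d hzero' hultra l B hB0 (l.length - 1 - (k+1)) (k+1) (l.length - 1)
        (by omega) (by omega) rfl ?_
      intro t ht1 ht2
      have htE : t < E.length := by omega
      rw [← hE t htE]
      exact hedgeB t htE (by omega)
    -- derive M ≤ B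
    have hMB : M ≤ B := by
      have h0 : M = d (l[k]'(by omega)) (l[k+1]'(by omega)) := by rw [← hkE, hE k hk]
      have h1 : d (l[k]'(by omega)) (l[k+1]'(by omega)) ≤
          max (d (l[k]'(by omega)) (l[0]'(by omega)))
              (d (l[0]'(by omega)) (l[k+1]'(by omega))) := hultra _ _ _
      have h2 : d (l[0]'(by omega)) (l[k+1]'(by omega)) ≤
          max (d (l[0]'(by omega)) (l[l.length-1]'(by omega)))
              (d (l[l.length-1]'(by omega)) (l[k+1]'(by omega))) := hultra _ _ _
      have ha : d (l[k]'(by omega)) (l[0]'(by omega)) ≤ B := by rw [hsymm]; exact hchain1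
      have hb : d (l[0]'(by omega)) (l[l.length-1]'(by omega)) ≤ B := by
        rw [hsymm]
        exact le_trans (le_of_eq hDdef.symm) (le_max_left _ (L.foldr max 0))
      have hc : d (l[l.length-1]'(by omega)) (l[k+1]'(by omega)) ≤ B := by
        rw [hsymm]; exact hchain2
      rw [h0]
      exact le_trans h1 (max_le ha (le_trans h2 (max_le hb hc)))
    exact absurd (lt_of_le_of_lt hMB hBlt) (lt_irrefl M)
  have hDeq : D = M := le_antisymm hDM hMD
  constructor
  · rw [hDeq]; exact hMmem
  · intro r hr
    rw [hDeq]
    exact hleM r hr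
end

section
/- Let (X,d) be a finite ultrametric space with |X| ≥ 3. If X contains no equilateral triangle (i.e., there are no three distinct points x,y,z with d(x,y) = d(y,z) = d(z,x)), then for every subset X₁ ⊆ X with |X₁| ≥ 3 there is a Hamiltonian cycle through X₁ with exactly two edges of maximal weight (i.e., a cyclic enumeration of X₁ in which exactly two consecutive-pair distances attain the maximum among all consecutive-pair distances). -/
/-!
Fix a ∈ X₁ and a point b ∈ X₁ farthest from a, and put M = d(a, b). The strong triangle
inequality splits X₁ into the ball A = {x : d(a, x) < M} and its complement B, with all
distances inside A below M and all distances between A and B equal to M. Two distinct points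
of B lie at distance M from a, so without equilateral triangles they are closer than M to each
other. Hence listing A and then B gives a cycle whose only edges of weight M are the two
crossings between A and B.
-/

section Ultrametric

variable {X α : Type*} [LinearOrder α] {d : X → X → α}
  (hsymm : ∀ x y, d x y = d y x) (hultra : ∀ x y z, d x y ≤ max (d x z) (d z y))
include hsymm hultra

theorem ultra_le_of_le_of_le {a x y : X} {r : α} (hx : d a x ≤ r) (hy : d a y ≤ r) :
    d x y ≤ r :=
  (hultra x y a).trans (max_le (hsymm x a ▸ hx) hy)

theorem ultra_lt_of_lt_of_lt {a x y : X} {r : α} (hx : d a x < r) (hy : d a y < r) :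
    d x y < r :=
  (hultra x y a).trans_lt (max_lt (hsymm x a ▸ hx) hy)

theorem ultra_dist_eq_of_lt {a x y : X} (h : d a x < d a y) : d x y = d a y :=
  le_antisymm (ultra_le_of_le_of_le hsymm hultra h.le le_rfl)
    ((le_max_iff.mp (hultra a y x)).resolve_left h.not_ge)

theorem ultra_lt_of_dist_eq_of_not_equilateral
    (hnoeq : ¬∃ x y z : X, x ≠ y ∧ y ≠ z ∧ x ≠ z ∧ d x y = d y z ∧ d y z = d z x)
    {a x y : X} {r : α} (hax : a ≠ x) (hay : a ≠ y) (hxy : x ≠ y) (hx : d a x = r)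
    (hy : d a y = r) : d x y < r :=
  (ultra_le_of_le_of_le hsymm hultra hx.le hy.le).lt_of_ne fun h =>
    hnoeq ⟨a, x, y, hax, hxy, hay, hx.trans h.symm, h.trans (hy ▸ hsymm a y)⟩

end Ultrametric

section CycleWeights

variable {X α : Type*} (w : X → X → α)

def cycleWeights (l : List X) : List α :=
  (l.zip (l.rotate 1)).map fun p => w p.1 p.2

variable [LinearOrder α] {M : α}

theorem path_weights_of_cluster {y : X} :
    ∀ {x : X} {xs : List X}, (∀ u ∈ x :: xs, ∀ v ∈ x :: xs, w u v < M) →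
      (∀ u ∈ x :: xs, w u y = M) →
      (∀ r ∈ ((x :: xs).zip (xs ++ [y])).map (fun p => w p.1 p.2), r ≤ M) ∧
        (((x :: xs).zip (xs ++ [y])).map (fun p => w p.1 p.2)).count M = 1
  | x, [], _, hout => by simp [hout x (by simp)]
  | x, x' :: xs, hin, hout => by
    have hstep : w x x' < M := hin x (by simp) x' (by simp)
    obtain ⟨hle, hcount⟩ := path_weights_of_cluster (x := x') (xs := xs)
      (fun u hu v hv => hin u (.tail _ hu) v (.tail _ hv)) (fun u hu => hout u (.tail _ hu))
    simp only [List.cons_append, List.zip_cons_cons, List.map_cons, List.forall_mem_cons]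
    exact ⟨⟨hstep.le, hle⟩, by rw [List.count_cons_of_ne hstep.ne, hcount]⟩

theorem cycle_weights_of_two_clusters {a b : X} {as bs : List X}
    (hA : ∀ u ∈ a :: as, ∀ v ∈ a :: as, w u v < M) (hB : ∀ u ∈ b :: bs, ∀ v ∈ b :: bs, w u v < M)
    (hAB : ∀ u ∈ a :: as, ∀ v ∈ b :: bs, w u v = M)
    (hBA : ∀ u ∈ b :: bs, ∀ v ∈ a :: as, w u v = M) :
    (∀ r ∈ cycleWeights w (a :: as ++ b :: bs), r ≤ M) ∧
      (cycleWeights w (a :: as ++ b :: bs)).count M = 2 := by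
  have hsplit : (a :: as ++ b :: bs).zip ((a :: as ++ b :: bs).rotate 1) =
      (a :: as).zip (as ++ [b]) ++ (b :: bs).zip (bs ++ [a]) := by
    rw [← List.zip_append (by simp)]
    simp
  obtain ⟨hleA, hcountA⟩ := path_weights_of_cluster w hA (fun u hu => hAB u hu b (by simp))
  obtain ⟨hleB, hcountB⟩ := path_weights_of_cluster w hB (fun u hu => hBA u hu a (by simp))
  simp only [cycleWeights, hsplit, List.map_append, List.mem_append, List.count_append]
  exact ⟨fun r hr => hr.elim (hleA r) (hleB r), by rw [hcountA, hcountB]⟩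

theorem exists_cycle_of_two_clusters [DecidableEq X] {A B : Finset X} (hAne : A.Nonempty) (hBne : B.Nonempty)
    (hA : ∀ u ∈ A, ∀ v ∈ A, w u v < M) (hB : ∀ u ∈ B, ∀ v ∈ B, w u v < M)
    (hAB : ∀ u ∈ A, ∀ v ∈ B, w u v = M) (hBA : ∀ u ∈ B, ∀ v ∈ A, w u v = M) :
    ∃ l : List X, l.Nodup ∧ l.toFinset = A ∪ B ∧
      (∀ r ∈ cycleWeights w l, r ≤ M) ∧ (cycleWeights w l).count M = 2 := by
  obtain ⟨a, as, hAl⟩ := List.exists_cons_of_ne_nil (Finset.toList_eq_nil.not.mpr hAne.ne_empty)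
  obtain ⟨b, bs, hBl⟩ := List.exists_cons_of_ne_nil (Finset.toList_eq_nil.not.mpr hBne.ne_empty)
  have hdisj : Disjoint A B := Finset.disjoint_left.mpr fun x hxA hxB =>
    (hA x hxA x hxA).ne (hAB x hxA x hxB)
  refine ⟨A.toList ++ B.toList, ?_, by simp, ?_⟩
  · exact List.nodup_append.mpr ⟨A.nodup_toList, B.nodup_toList,
      fun x hxA y hxB hxy => Finset.disjoint_left.mp hdisj (Finset.mem_toList.mp hxA)
        (hxy ▸ Finset.mem_toList.mp hxB)⟩
  · have memA {u : X} (hu : u ∈ a :: as) : u ∈ A := Finset.mem_toList.mp (hAl ▸ hu)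
    have memB {u : X} (hu : u ∈ b :: bs) : u ∈ B := Finset.mem_toList.mp (hBl ▸ hu)
    rw [hAl, hBl]
    exact cycle_weights_of_two_clusters w (fun u hu v hv => hA u (memA hu) v (memA hv))
      (fun u hu v hv => hB u (memB hu) v (memB hv)) (fun u hu v hv => hAB u (memA hu) v (memB hv))
      (fun u hu v hv => hBA u (memB hu) v (memA hv))

end CycleWeights

theorem no_equilateral_implies_cycles_general {X : Type*} [DecidableEq X]
    (d : X → X → ℝ)
    (hnonneg : ∀ x y, 0 ≤ d x y)
    (hsymm : ∀ x y, d x y = d y x)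
    (hzero : ∀ x y, d x y = 0 ↔ x = y)
    (hultra : ∀ x y z, d x y ≤ max (d x z) (d z y))
    (hnoeq : ¬∃ x y z : X, x ≠ y ∧ y ≠ z ∧ x ≠ z ∧
      d x y = d y z ∧ d y z = d z x) :
    ∀ X₁ : Finset X, 3 ≤ X₁.card →
      ∃ l : List X, l.Nodup ∧ l.toFinset = X₁ ∧
        ∃ M : ℝ,
          (∀ r ∈ (l.zip (l.rotate 1)).map (fun p => d p.1 p.2), r ≤ M) ∧
          ((l.zip (l.rotate 1)).map (fun p => d p.1 p.2)).count M = 2 := by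
  intro s hs
  obtain ⟨a, ha⟩ := s.card_pos.mp (by omega)
  obtain ⟨b, hb, hfar⟩ := s.exists_max_image (d a) ⟨a, ha⟩
  set M := d a b
  have hself (x : X) : d x x < M := by
    obtain ⟨x', hx', hx'a⟩ := s.exists_mem_ne (by omega) a
    have hpos : 0 < d a x' := (hnonneg a x').lt_of_ne fun h => hx'a ((hzero a x').mp h.symm).symm
    rw [(hzero x x).mpr rfl]
    exact hpos.trans_le (hfar x' hx')
  set A := s.filter (d a · < M)
  set B := s.filter (fun x => ¬d a x < M)
  have hB {x : X} (hx : x ∈ B) : d a x = M :=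
    (hfar x (Finset.mem_filter.mp hx).1).antisymm (not_lt.mp (Finset.mem_filter.mp hx).2)
  have hAA : ∀ u ∈ A, ∀ v ∈ A, d u v < M := fun u hu v hv =>
    ultra_lt_of_lt_of_lt hsymm hultra (Finset.mem_filter.mp hu).2 (Finset.mem_filter.mp hv).2
  have hBB : ∀ u ∈ B, ∀ v ∈ B, d u v < M := by
    intro u hu v hv
    obtain rfl | huv := eq_or_ne u v
    · exact hself u
    have hne {x : X} (hx : x ∈ B) : a ≠ x := fun h => (hself a).ne (h ▸ hB hx)
    exact ultra_lt_of_dist_eq_of_not_equilateral hsymm hultra hnoeq (hne hu) (hne hv) huv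
      (hB hu) (hB hv)
  have hAB : ∀ u ∈ A, ∀ v ∈ B, d u v = M := fun u hu v hv =>
    (ultra_dist_eq_of_lt hsymm hultra ((Finset.mem_filter.mp hu).2.trans_eq (hB hv).symm)).trans
      (hB hv)
  obtain ⟨l, hnodup, hl, hcycle⟩ := exists_cycle_of_two_clusters d
    ⟨a, Finset.mem_filter.mpr ⟨ha, hself a⟩⟩ ⟨b, Finset.mem_filter.mpr ⟨hb, lt_irrefl M⟩⟩
    hAA hBB hAB fun u hu v hv => (hsymm u v).trans (hAB v hv u hu)
  exact ⟨l, hnodup, hl.trans (s.filter_union_filter_not_eq _), M, hcycle⟩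

/-- If a finite ultrametric space with at least 3 points contains no equilateral
triangle, then every subset with at least 3 points admits a Hamiltonian cycle
with exactly two edges of maximal weight. -/
theorem no_equilateral_implies_cycles {X : Type*} [Fintype X] [DecidableEq X]
    (d : X → X → ℝ)
    (hcard : 3 ≤ Fintype.card X)
    (hnonneg : ∀ x y, 0 ≤ d x y)
    (hsymm : ∀ x y, d x y = d y x)
    (hzero : ∀ x y, d x y = 0 ↔ x = y)
    (hultra : ∀ x y z, d x y ≤ max (d x z) (d z y))
    (hnoeq : ¬∃ x y z : X, x ≠ y ∧ y ≠ z ∧ x ≠ z ∧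
      d x y = d y z ∧ d y z = d z x) :
    ∀ X₁ : Finset X, 3 ≤ X₁.card →
      ∃ l : List X, l.Nodup ∧ l.toFinset = X₁ ∧
        ∃ M : ℝ,
          (∀ r ∈ (l.zip (l.rotate 1)).map (fun p => d p.1 p.2), r ≤ M) ∧
          ((l.zip (l.rotate 1)).map (fun p => d p.1 p.2)).count M = 2 :=
  no_equilateral_implies_cycles_general d hnonneg hsymm hzero hultra hnoeq
end

section
/- Let (X,d) be a finite ultrametric space with |Sp(X)| = |X|. Then X contains no equilateral triangle: there do not exist three distinct points x, y, z in X with d(x,y) = d(y,z) = d(z,x). -/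
open Finset

section GomoryHu

open scoped Classical

variable {X : Type*} [Fintype X] (d : X → X → ℝ)
  (hsymm : ∀ x y, d x y = d y x)
  (hultra : ∀ x y z, d x y ≤ max (d x z) (d z y))

/-- The equivalence relation "distance less than `t`" (forced reflexive). -/
def triSetoid (t : ℝ) : Setoid X :=
  ⟨fun x y => x = y ∨ d x y < t,
    ⟨fun x => Or.inl rfl,
    by
      intro x y h
      rcases h with h | h
      · exact Or.inl h.symm
      · exact Or.inr (by rwa [hsymm]),
    by
      intro x y z hxy hyz
      rcases hxy with rfl | hxy
      · exact hyz
      rcases hyz with rfl | hyz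
      · exact Or.inr hxy
      exact Or.inr (lt_of_le_of_lt (hultra x z y) (max_lt hxy hyz))⟩⟩

/-- Number of equivalence classes at level `t`. -/
noncomputable def nClasses (t : ℝ) : ℕ :=
  Fintype.card (Quotient (triSetoid d hsymm hultra t))

/-- The natural map between quotients at levels `t ≤ t'`. -/
def qmap {t t' : ℝ} (h : t ≤ t') :
    Quotient (triSetoid d hsymm hultra t) → Quotient (triSetoid d hsymm hultra t') :=
  Quotient.map' id (by
    intro a b hab
    rcases hab with rfl | hab
    · exact Or.inl rfl
    · exact Or.inr (lt_of_lt_of_le hab h))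

theorem qmap_surjective {t t' : ℝ} (h : t ≤ t') :
    Function.Surjective (qmap d hsymm hultra h) := by
  intro q
  induction q using Quotient.inductionOn' with
  | h a => exact ⟨Quotient.mk'' a, rfl⟩

theorem qmap_mk {t t' : ℝ} (h : t ≤ t') (a : X) :
    qmap d hsymm hultra h (Quotient.mk'' a) = Quotient.mk'' a :=
  rfl

theorem nClasses_mono {t t' : ℝ} (h : t ≤ t') :
    nClasses d hsymm hultra t' ≤ nClasses d hsymm hultra t :=
  Fintype.card_le_of_surjective _ (qmap_surjective d hsymm hultra h)

theorem mk_ne_mk {t : ℝ} {a b : X} (hab : a ≠ b) (hd : ¬ d a b < t) :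
    (Quotient.mk'' a : Quotient (triSetoid d hsymm hultra t)) ≠ Quotient.mk'' b := by
  intro h
  rcases Quotient.exact' h with h' | h'
  · exact hab h'
  · exact hd h'

theorem mk_eq_mk {t : ℝ} {a b : X} (hd : d a b < t) :
    (Quotient.mk'' a : Quotient (triSetoid d hsymm hultra t)) = Quotient.mk'' b :=
  Quotient.sound' (Or.inr hd)

/-- Strict drop in the number of classes across a realized distance. -/
theorem nClasses_strict {t t' : ℝ} (h : t ≤ t') {a b : X} (hab : a ≠ b)
    (h1 : ¬ d a b < t) (h2 : d a b < t') :
    nClasses d hsymm hultra t' < nClasses d hsymm hultra t := by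
  refine Fintype.card_lt_of_surjective_not_injective _
    (qmap_surjective d hsymm hultra h) ?_
  intro hinj
  have : (Quotient.mk'' a : Quotient (triSetoid d hsymm hultra t)) = Quotient.mk'' b := by
    apply hinj
    rw [qmap_mk, qmap_mk]
    exact mk_eq_mk d hsymm hultra h2
  exact mk_ne_mk d hsymm hultra hab h1 this

/-- If a surjection identifies three distinct points, the target is smaller by at least 2. -/
theorem card_add_two_le {α β : Type*} [Fintype α] [Fintype β] (f : α → β)
    (hf : Function.Surjective f) (a b c : α) (hab : a ≠ b) (hac : a ≠ c) (hbc : b ≠ c)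
    (h1 : f a = f b) (h2 : f a = f c) :
    Fintype.card β + 2 ≤ Fintype.card α := by
  classical
  have hsurj : Set.SurjOn f ((univ.erase b).erase c : Finset α) ((univ : Finset β) : Set β) := by
    intro y _
    obtain ⟨x, rfl⟩ := hf y
    by_cases hxb : x = b
    · exact ⟨a, by simp [hab, hac], by rw [h1, hxb]⟩
    by_cases hxc : x = c
    · exact ⟨a, by simp [hab, hac], by rw [h2, hxc]⟩
    · exact ⟨x, by simp [hxb, hxc], rfl⟩
  have hcard : (univ : Finset β).card ≤ ((univ.erase b).erase c).card :=
    Finset.card_le_card_of_surjOn f hsurj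
  have h1' : ((univ.erase b).erase c).card = (univ.erase b : Finset α).card - 1 :=
    Finset.card_erase_of_mem (by simp [Ne.symm hbc])
  have h2' : (univ.erase b : Finset α).card = (univ : Finset α).card - 1 :=
    Finset.card_erase_of_mem (by simp)
  have hb : b ∈ (univ : Finset α) := by simp
  have hc : c ∈ (univ.erase b : Finset α) := by simp [Ne.symm hbc]
  have hge1 : 1 ≤ (univ : Finset α).card := Finset.card_pos.mpr ⟨b, hb⟩
  have hge2 : 1 ≤ (univ.erase b : Finset α).card := Finset.card_pos.mpr ⟨c, hc⟩
  simp only [Finset.card_univ] at *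
  omega

/-- A jump of at least 2 across the side length of an equilateral triangle. -/
theorem nClasses_jump {t t' : ℝ} (h : t ≤ t') {x y z : X}
    (hxy : x ≠ y) (hyz : y ≠ z) (hxz : x ≠ z)
    (h1 : ¬ d x y < t) (h2 : ¬ d y z < t) (h3 : ¬ d x z < t)
    (h1' : d x y < t') (h2' : d y z < t') (h3' : d x z < t') :
    nClasses d hsymm hultra t' + 2 ≤ nClasses d hsymm hultra t := by
  refine card_add_two_le (qmap d hsymm hultra h)
    (qmap_surjective d hsymm hultra h)
    (Quotient.mk'' x) (Quotient.mk'' y) (Quotient.mk'' z)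
    (mk_ne_mk d hsymm hultra hxy h1)
    (mk_ne_mk d hsymm hultra hxz h3)
    (mk_ne_mk d hsymm hultra hyz h2) ?_ ?_
  · rw [qmap_mk, qmap_mk]; exact mk_eq_mk d hsymm hultra h1'
  · rw [qmap_mk, qmap_mk]; exact mk_eq_mk d hsymm hultra h3'

/-- The chain lemma: every realized distance in `[t₀, t₁)` forces a drop of one class. -/
theorem chain (hrefl : ∀ x : X, d x x = 0) (T : Finset ℝ) :
    ∀ t₀ t₁ : ℝ, 0 < t₀ → t₀ ≤ t₁ →
      (∀ s ∈ T, t₀ ≤ s ∧ s < t₁ ∧ ∃ a b : X, d a b = s) →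
      nClasses d hsymm hultra t₁ + T.card ≤ nClasses d hsymm hultra t₀ := by
  induction T using Finset.strongInduction with
  | _ T ih =>
    intro t₀ t₁ h0 h01 hT
    rcases T.eq_empty_or_nonempty with rfl | hne
    · simpa using nClasses_mono d hsymm hultra h01
    · set s := T.max' hne with hs
      have hsmem : s ∈ T := T.max'_mem hne
      obtain ⟨hts, hst, a, b, hab⟩ := hT s hsmem
      have habne : a ≠ b := by
        intro hab'
        subst hab'
        rw [hrefl a] at hab
        linarith
      have step : nClasses d hsymm hultra t₁ < nClasses d hsymm hultra s :=
        nClasses_strict d hsymm hultra hst.le habne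
          (by rw [hab]; exact lt_irrefl s) (by rw [hab]; exact hst)
      have rest : nClasses d hsymm hultra s + (T.erase s).card ≤ nClasses d hsymm hultra t₀ := by
        refine ih (T.erase s) (Finset.erase_ssubset hsmem) t₀ s h0 hts ?_
        intro u hu
        obtain ⟨hu1, hu2, hu3⟩ := hT u (Finset.mem_of_mem_erase hu)
        refine ⟨hu1, ?_, hu3⟩
        have hle : u ≤ s := T.le_max' u (Finset.mem_of_mem_erase hu)
        have hne' : u ≠ s := Finset.ne_of_mem_erase hu
        exact lt_of_le_of_ne hle hne'
      have hcard : T.card = (T.erase s).card + 1 := by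
        rw [Finset.card_erase_of_mem hsmem]
        have : 1 ≤ T.card := Finset.card_pos.mpr hne
        omega
      omega

end GomoryHu

/-- A finite ultrametric space extremal for the Gomory-Hu inequality contains
no equilateral triangle. -/
theorem extremal_no_equilateral_triangle {X : Type*} [Fintype X]
    (d : X → X → ℝ)
    (hnonneg : ∀ x y, 0 ≤ d x y)
    (hsymm : ∀ x y, d x y = d y x)
    (hzero : ∀ x y, d x y = 0 ↔ x = y)
    (hultra : ∀ x y z, d x y ≤ max (d x z) (d z y))
    (hext : (Finset.univ.image (fun p : X × X => d p.1 p.2)).card = Fintype.card X) :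
    ¬∃ x y z : X, x ≠ y ∧ y ≠ z ∧ x ≠ z ∧
      d x y = d y z ∧ d y z = d z x := by
  classical
  rintro ⟨x, y, z, hxy, hyz, hxz, e1, e2⟩
  have hrefl : ∀ a : X, d a a = 0 := fun a => (hzero a a).mpr rfl
  set Sp : Finset ℝ := Finset.univ.image (fun p : X × X => d p.1 p.2) with hSp
  set r : ℝ := d x y with hrdef
  have hdyz : d y z = r := e1.symm
  have hdzx : d z x = r := by rw [← e2, ← e1]
  have hdxz : d x z = r := by rw [hsymm x z, hdzx]
  have hr : 0 < r := by
    rcases lt_or_eq_of_le (hnonneg x y) with h | h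
    · exact h
    · exact absurd ((hzero x y).mp h.symm) hxy
  have hmemSp : ∀ a b : X, d a b ∈ Sp := fun a b => by
    rw [hSp]
    exact Finset.mem_image.mpr ⟨(a, b), Finset.mem_univ _, rfl⟩
  have hSpne : Sp.Nonempty := ⟨r, hmemSp x y⟩
  have hrealized : ∀ s ∈ Sp, ∃ a b : X, d a b = s := by
    intro s hs
    rw [hSp] at hs
    obtain ⟨p, _, hp⟩ := Finset.mem_image.mp hs
    exact ⟨p.1, p.2, hp⟩
  set T : Finset ℝ := Sp.filter (fun s => 0 < s) with hT
  have hrT : r ∈ T := Finset.mem_filter.mpr ⟨hmemSp x y, hr⟩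
  have hTne : T.Nonempty := ⟨r, hrT⟩
  -- Sp.card = T.card + 1
  have hSpcard : Sp.card = T.card + 1 := by
    have h0Sp : (0 : ℝ) ∈ Sp := by
      have := hmemSp x x; rwa [hrefl x] at this
    have : Sp = insert 0 T := by
      ext a
      simp only [Finset.mem_insert, hT, Finset.mem_filter]
      constructor
      · intro ha
        rcases eq_or_ne a 0 with rfl | hne
        · exact Or.inl rfl
        · obtain ⟨p, q, hpq⟩ := hrealized a ha
          have : 0 < a := lt_of_le_of_ne (hpq ▸ hnonneg p q) (Ne.symm hne)
          exact Or.inr ⟨ha, this⟩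
      · rintro (rfl | ⟨ha, _⟩)
        · exact h0Sp
        · exact ha
    rw [this, Finset.card_insert_of_notMem]
    simp [hT]
  set t₁ : ℝ := Sp.max' hSpne + 1 with ht₁
  have hlt₁ : ∀ s ∈ Sp, s < t₁ := fun s hs => by
    have := Sp.le_max' s hs; rw [ht₁]; linarith
  set t₀ : ℝ := T.min' hTne with ht₀
  have ht₀mem : t₀ ∈ T := T.min'_mem hTne
  have ht₀pos : 0 < t₀ := (Finset.mem_filter.mp ht₀mem).2
  have ht₀le : ∀ s ∈ T, t₀ ≤ s := fun s hs => T.min'_le s hs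
  set A : Finset ℝ := T.filter (fun s => s < r) with hA
  set B : Finset ℝ := T.filter (fun s => r < s) with hB
  -- T.card = A.card + B.card + 1
  have hTcard : T.card = A.card + B.card + 1 := by
    have h1 := Finset.card_filter_add_card_filter_not
      (s := T) (p := fun s => s < r)
    have h2 : T.filter (fun s => ¬ s < r) = insert r B := by
      ext a
      simp only [Finset.mem_filter, Finset.mem_insert, hB, not_lt]
      constructor
      · rintro ⟨ha, hle⟩
        rcases eq_or_lt_of_le hle with h | h
        · exact Or.inl h.symm
        · exact Or.inr ⟨ha, h⟩
      · rintro (rfl | ⟨ha, h⟩)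
        · exact ⟨hrT, le_refl _⟩
        · exact ⟨ha, le_of_lt h⟩
    rw [h2, Finset.card_insert_of_notMem (by simp [hB])] at h1
    rw [hA]
    omega
  -- there is a level t'' just above r
  obtain ⟨t'', ht''r, ht''t₁, ht''le⟩ :
      ∃ t'', r < t'' ∧ t'' ≤ t₁ ∧ ∀ s ∈ B, t'' ≤ s := by
    rcases B.eq_empty_or_nonempty with hBe | hBne
    · exact ⟨t₁, hlt₁ r (hmemSp x y), le_refl _, by simp [hBe]⟩
    · refine ⟨B.min' hBne, ?_, ?_, fun s hs => B.min'_le s hs⟩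
      · exact (Finset.mem_filter.mp (B.min'_mem hBne)).2
      · have : B.min' hBne ∈ Sp :=
          (Finset.mem_filter.mp ((Finset.mem_filter.mp (B.min'_mem hBne)).1)).1
        exact le_of_lt (hlt₁ _ this)
  -- chain from t₀ up to r
  have chain1 : nClasses d hsymm hultra r + A.card ≤ nClasses d hsymm hultra t₀ := by
    refine chain d hsymm hultra hrefl A t₀ r ht₀pos (ht₀le r hrT) ?_
    intro s hs
    have hsT : s ∈ T := (Finset.mem_filter.mp hs).1
    exact ⟨ht₀le s hsT, (Finset.mem_filter.mp hs).2,
      hrealized s (Finset.mem_filter.mp hsT).1⟩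
  -- chain from t'' up to t₁
  have chain2 : nClasses d hsymm hultra t₁ + B.card ≤ nClasses d hsymm hultra t'' := by
    refine chain d hsymm hultra hrefl B t'' t₁ (lt_trans hr ht''r) ht''t₁ ?_
    intro s hs
    have hsT : s ∈ T := (Finset.mem_filter.mp hs).1
    have hsSp : s ∈ Sp := (Finset.mem_filter.mp hsT).1
    exact ⟨ht''le s hs, hlt₁ s hsSp, hrealized s hsSp⟩
  -- jump of 2 at r
  have jump : nClasses d hsymm hultra t'' + 2 ≤ nClasses d hsymm hultra r := by
    refine nClasses_jump d hsymm hultra (le_of_lt ht''r) hxy hyz hxz ?_ ?_ ?_ ?_ ?_ ?_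
    · rw [← hrdef]; exact lt_irrefl r
    · rw [hdyz]; exact lt_irrefl r
    · rw [hdxz]; exact lt_irrefl r
    · rw [← hrdef]; exact ht''r
    · rw [hdyz]; exact ht''r
    · rw [hdxz]; exact ht''r
  -- bottom level counts all points
  have hbot : nClasses d hsymm hultra t₀ = Fintype.card X := by
    have hbij : Function.Bijective
        (Quotient.mk'' : X → Quotient (triSetoid d hsymm hultra t₀)) := by
      constructor
      · intro a b hab
        rcases Quotient.exact' hab with h | h
        · exact h
        · by_contra hne
          have : d a b ∈ T := Finset.mem_filter.mpr ⟨hmemSp a b,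
            lt_of_le_of_ne (hnonneg a b) (fun h0 => hne ((hzero a b).mp h0.symm))⟩
          exact absurd h (not_lt.mpr (ht₀le _ this))
      · exact fun q => Quotient.inductionOn' q (fun a => ⟨a, rfl⟩)
    exact (Fintype.card_of_bijective hbij).symm
  -- top level is nonempty
  have htop : 1 ≤ nClasses d hsymm hultra t₁ := by
    have : Nonempty (Quotient (triSetoid d hsymm hultra t₁)) := ⟨Quotient.mk'' x⟩
    exact Fintype.card_pos
  -- put everything together
  rw [hSpcard, hTcard] at hext
  omega
end

section
/- Let (X, d_X) and (Y, d_Y) be compact ultrametric spaces with Sp(X) = Sp(Y). Then every weak similarity Φ : X → Y is an isometry, where a weak similarity is a bijection Φ : X → Y for which there exists a strictly increasing bijection f : Sp(Y) → Sp(X) with d_X(x,y) = f(d_Y(Φ(x), Φ(y))) for all x, y ∈ X. (It suffices to prove this for finite ultrametric spaces.) -/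
theorem Set.Finite.eq_self_of_strictMonoOn_of_bijOn {α : Type*} [LinearOrder α] {s : Set α}
    (hs : s.Finite) {f : α → α} (hbij : Set.BijOn f s s) (hmono : StrictMonoOn f s)
    {a : α} (ha : a ∈ s) : f a = a := by
  have : Finite s := hs.to_subtype
  let g : s → s := hbij.mapsTo.restrict f s s
  have hg : StrictMono g := fun _ _ h => hmono (Subtype.prop _) (Subtype.prop _) h
  -- a finite linear order is well-ordered, so its only order automorphism is the identity
  have hg_refl : hg.orderIsoOfSurjective g hbij.bijective.surjective = OrderIso.refl s :=
    Subsingleton.elim _ _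
  exact congrArg Subtype.val (DFunLike.congr_fun hg_refl ⟨a, ha⟩)

theorem weak_similarity_is_isometry_general {X Y : Type*} [Fintype X] [Fintype Y]
    (dX : X → X → ℝ) (dY : Y → Y → ℝ)
    (hspec : Finset.univ.image (fun p : X × X => dX p.1 p.2) =
      Finset.univ.image (fun p : Y × Y => dY p.1 p.2))
    (Φ : X → Y)
    (f : ℝ → ℝ)
    (hfbij : Set.BijOn f
      ↑(Finset.univ.image (fun p : Y × Y => dY p.1 p.2))
      ↑(Finset.univ.image (fun p : X × X => dX p.1 p.2)))
    (hfmono : StrictMonoOn f ↑(Finset.univ.image (fun p : Y × Y => dY p.1 p.2)))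
    (heq : ∀ x y : X, dX x y = f (dY (Φ x) (Φ y))) :
    ∀ x y : X, dX x y = dY (Φ x) (Φ y) := by
  rw [hspec] at hfbij
  intro x y
  have hmem : dY (Φ x) (Φ y) ∈ Finset.univ.image (fun p : Y × Y => dY p.1 p.2) :=
    Finset.mem_image_of_mem _ (Finset.mem_univ (Φ x, Φ y))
  rw [heq x y, (Finset.finite_toSet _).eq_self_of_strictMonoOn_of_bijOn hfbij hfmono hmem]

/-- If two finite ultrametric spaces have the same spectrum, then every weak
similarity between them is an isometry. -/
theorem weak_similarity_is_isometry {X Y : Type*} [Fintype X] [Fintype Y]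
    (dX : X → X → ℝ) (dY : Y → Y → ℝ)
    (hXnonneg : ∀ x y, 0 ≤ dX x y)
    (hXsymm : ∀ x y, dX x y = dX y x)
    (hXzero : ∀ x y, dX x y = 0 ↔ x = y)
    (hXultra : ∀ x y z, dX x y ≤ max (dX x z) (dX z y))
    (hYnonneg : ∀ x y, 0 ≤ dY x y)
    (hYsymm : ∀ x y, dY x y = dY y x)
    (hYzero : ∀ x y, dY x y = 0 ↔ x = y)
    (hYultra : ∀ x y z, dY x y ≤ max (dY x z) (dY z y))
    (hspec : Finset.univ.image (fun p : X × X => dX p.1 p.2) =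
      Finset.univ.image (fun p : Y × Y => dY p.1 p.2))
    (Φ : X → Y) (hΦ : Function.Bijective Φ)
    (f : ℝ → ℝ)
    (hfbij : Set.BijOn f
      ↑(Finset.univ.image (fun p : Y × Y => dY p.1 p.2))
      ↑(Finset.univ.image (fun p : X × X => dX p.1 p.2)))
    (hfmono : StrictMonoOn f ↑(Finset.univ.image (fun p : Y × Y => dY p.1 p.2)))
    (heq : ∀ x y : X, dX x y = f (dY (Φ x) (Φ y))) :
    ∀ x y : X, dX x y = dY (Φ x) (Φ y) :=
  weak_similarity_is_isometry_general dX dY hspec Φ f hfbij hfmono heq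
end

section
/- Let (X,d) be a finite semimetric space and let B be a closed ball of X with |B| ≥ 2. Then B has at least two direct predecessors in the Hasse diagram of the poset of closed balls of X ordered by inclusion, and the union of all direct predecessors of B equals B. -/
/-- A closed ball of a semimetric space. -/
def IsClosedBall {X : Type*} (d : X → X → ℝ) (S : Set X) : Prop :=
  ∃ t : X, ∃ r : ℝ, 0 ≤ r ∧ S = {x : X | d x t ≤ r}

/-- `S` is a direct predecessor of `B` in the Hasse diagram of the poset of
closed balls ordered by inclusion. -/
def IsDirectPred {X : Type*} (d : X → X → ℝ) (S B : Set X) : Prop :=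
  IsClosedBall d S ∧ S ⊂ B ∧
    ∀ W : Set X, IsClosedBall d W → S ⊂ W → W ⊂ B → False

/-!
Every singleton is a ball, and in a finite space every ball strictly inside `B` lies in a
maximal one, i.e. in a direct predecessor of `B`. When `B` has two points each `{x}` with
`x ∈ B` is strictly inside `B`, so the direct predecessors cover `B`; none of them is all of
`B`, so a point missed by one is covered by another.
-/

section

variable {X : Type*} (d : X → X → ℝ)

lemma isClosedBall_singleton (hnonneg : ∀ x y, 0 ≤ d x y) (hzero : ∀ x y, d x y = 0 ↔ x = y)
    (x : X) : IsClosedBall d {x} := by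
  refine ⟨x, 0, le_rfl, Set.ext fun y => ?_⟩
  rw [Set.mem_singleton_iff, Set.mem_ofPred_eq, ← hzero]
  exact ⟨fun h => h.le, fun h => h.antisymm (hnonneg y x)⟩

lemma IsDirectPred.subset {S B : Set X} (h : IsDirectPred d S B) : S ⊆ B :=
  h.2.1.subset

lemma exists_isDirectPred_superset [Finite X] {S B : Set X} (hS : IsClosedBall d S)
    (hSB : S ⊂ B) : ∃ P, S ⊆ P ∧ IsDirectPred d P B := by
  obtain ⟨P, hSP, ⟨hP, hPB⟩, hmax⟩ :=
    Finite.exists_le_maximal (p := fun W => IsClosedBall d W ∧ W ⊂ B) ⟨hS, hSB⟩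
  exact ⟨P, hSP, hP, hPB, fun W hW hPW hWB => hPW.not_subset (hmax ⟨hW, hWB⟩ hPW.subset)⟩

lemma exists_isDirectPred_mem [Finite X] (hnonneg : ∀ x y, 0 ≤ d x y)
    (hzero : ∀ x y, d x y = 0 ↔ x = y) {B : Set X} (hB : 1 < B.ncard) {x : X} (hx : x ∈ B) :
    ∃ P, x ∈ P ∧ IsDirectPred d P B := by
  obtain ⟨y, hyB, hyx⟩ := Set.exists_ne_of_one_lt_ncard hB x
  have hxB : {x} ⊂ B :=
    (Set.ssubset_iff_of_subset (Set.singleton_subset_iff.mpr hx)).mpr ⟨y, hyB, hyx⟩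
  obtain ⟨P, hxP, hP⟩ :=
    exists_isDirectPred_superset d (isClosedBall_singleton d hnonneg hzero x) hxB
  exact ⟨P, hxP rfl, hP⟩

end

theorem ball_direct_predecessors_general {X : Type*} [Fintype X]
    (d : X → X → ℝ)
    (hnonneg : ∀ x y, 0 ≤ d x y)
    (hzero : ∀ x y, d x y = 0 ↔ x = y)
    (B : Set X) (hB2 : 2 ≤ B.ncard) :
    (∃ S₁ S₂ : Set X, S₁ ≠ S₂ ∧ IsDirectPred d S₁ B ∧ IsDirectPred d S₂ B) ∧
    ⋃₀ {S : Set X | IsDirectPred d S B} = B := by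
  have hpred := fun x (hx : x ∈ B) => exists_isDirectPred_mem d hnonneg hzero hB2 hx
  refine ⟨?_, Set.Subset.antisymm (Set.sUnion_subset fun S hS => hS.subset) fun x hx => ?_⟩
  · obtain ⟨x, hx⟩ := Set.nonempty_of_ncard_ne_zero (by omega : B.ncard ≠ 0)
    obtain ⟨P₁, -, hP₁⟩ := hpred x hx
    obtain ⟨z, hzB, hzP₁⟩ := Set.exists_of_ssubset hP₁.2.1
    obtain ⟨P₂, hzP₂, hP₂⟩ := hpred z hzB
    exact ⟨P₁, P₂, fun h => hzP₁ (h ▸ hzP₂), hP₁, hP₂⟩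
  · obtain ⟨P, hxP, hP⟩ := hpred x hx
    exact ⟨P, hP, hxP⟩

/-- In a finite semimetric space, every closed ball with at least two points
has at least two direct predecessors in the Hasse diagram of the poset of
closed balls, and the union of all its direct predecessors equals the ball. -/
theorem ball_direct_predecessors {X : Type*} [Fintype X]
    (d : X → X → ℝ)
    (hnonneg : ∀ x y, 0 ≤ d x y)
    (hsymm : ∀ x y, d x y = d y x)
    (hzero : ∀ x y, d x y = 0 ↔ x = y)
    (B : Set X) (hB : IsClosedBall d B) (hB2 : 2 ≤ B.ncard) :
    (∃ S₁ S₂ : Set X, S₁ ≠ S₂ ∧ IsDirectPred d S₁ B ∧ IsDirectPred d S₂ B) ∧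
    ⋃₀ {S : Set X | IsDirectPred d S B} = B :=
  ball_direct_predecessors_general d hnonneg hzero B hB2
end

section
/- Let (X, d) be a finite ultrametric space with |Sp(X)| = |X| and let Y ⊆ X be nonempty. Then the subspace (Y, d) also satisfies |Sp(Y)| = |Y|. -/
open Finset

section Aux

variable {X : Type*} [DecidableEq X] (d : X → X → ℝ)

/-- Spectrum of a finite subspace. -/
private noncomputable def spd (Y : Finset X) : Finset ℝ := (Y ×ˢ Y).image (fun p => d p.1 p.2)

private lemma mem_spd {Y : Finset X} {a b : X} (ha : a ∈ Y) (hb : b ∈ Y) :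
    d a b ∈ spd d Y := by
  apply Finset.mem_image.2
  exact ⟨(a, b), Finset.mem_product.2 ⟨ha, hb⟩, rfl⟩

private lemma spd_step
    (hsymm : ∀ x y, d x y = d y x)
    (hzero : ∀ x y, d x y = 0 ↔ x = y)
    (hultra : ∀ x y z, d x y ≤ max (d x z) (d z y))
    {Y : Finset X} (hY : Y.Nonempty) (x : X) :
    (spd d (insert x Y)).card ≤ (spd d Y).card + 1 := by
  obtain ⟨y0, hy0, hm⟩ := Finset.exists_mem_eq_inf' hY (fun y => d x y)
  set m := Y.inf' hY (fun y => d x y) with hmdef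
  have key : ∀ y ∈ Y, d x y ∈ insert m (spd d Y) := by
    intro y hy
    have hmle : m ≤ d x y := Finset.inf'_le _ hy
    by_cases hcase : d x y = m
    · exact Finset.mem_insert.2 (Or.inl hcase)
    · have hmlt : m < d x y := lt_of_le_of_ne hmle (Ne.symm hcase)
      have h1 : d y0 y ≤ d x y := by
        refine le_trans (hultra y0 y x) (max_le ?_ le_rfl)
        rw [← hsymm x y0, ← hm]; exact le_of_lt hmlt
      have h2 : d x y ≤ d y0 y := by
        by_contra hcon
        push_neg at hcon
        have := hultra x y y0
        have hxy0 : d x y0 = m := hm.symm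
        rw [hxy0] at this
        have : d x y ≤ max m (d y0 y) := this
        have hlt : max m (d y0 y) < d x y := max_lt hmlt hcon
        linarith
      have : d x y = d y0 y := le_antisymm h2 h1
      exact Finset.mem_insert.2 (Or.inr (this ▸ mem_spd d hy0 hy))
  have hsub : spd d (insert x Y) ⊆ insert m (spd d Y) := by
    intro r hr
    obtain ⟨⟨a, b⟩, hab, hr⟩ := Finset.mem_image.1 hr
    obtain ⟨ha, hb⟩ := Finset.mem_product.1 hab
    subst hr
    simp only [Finset.mem_insert] at ha hb
    rcases ha with ha | ha <;> rcases hb with hb | hb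
    · obtain ⟨y, hy⟩ := hY
      have : d a b = d y y := by
        rw [ha, hb, (hzero x x).2 rfl, (hzero y y).2 rfl]
      exact Finset.mem_insert.2 (Or.inr (this ▸ mem_spd d hy hy))
    · rw [ha]; exact key b hb
    · rw [hb, hsymm a x]; exact key a ha
    · exact Finset.mem_insert.2 (Or.inr (mem_spd d ha hb))
  calc (spd d (insert x Y)).card ≤ (insert m (spd d Y)).card :=
        Finset.card_le_card hsub
    _ ≤ (spd d Y).card + 1 := Finset.card_insert_le _ _

private lemma spd_acc
    (hsymm : ∀ x y, d x y = d y x)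
    (hzero : ∀ x y, d x y = 0 ↔ x = y)
    (hultra : ∀ x y z, d x y ≤ max (d x z) (d z y))
    (s : Finset X) :
    ∀ Y : Finset X, Y.Nonempty → (spd d (Y ∪ s)).card ≤ (spd d Y).card + s.card := by
  induction s using Finset.induction_on with
  | empty => intro Y hY; simp
  | @insert a s ha ih =>
    intro Y hY
    have hins : Y ∪ insert a s = insert a (Y ∪ s) := by
      ext z; simp [or_left_comm, or_comm, or_assoc]
    rw [hins, Finset.card_insert_of_notMem ha]
    calc (spd d (insert a (Y ∪ s))).card
        ≤ (spd d (Y ∪ s)).card + 1 :=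
          spd_step d hsymm hzero hultra (hY.mono Finset.subset_union_left) a
      _ ≤ (spd d Y).card + s.card + 1 := by
          exact Nat.add_le_add_right (ih Y hY) 1
      _ = (spd d Y).card + (s.card + 1) := by ring

end Aux

/-- Extremality for the Gomory-Hu inequality is hereditary: every nonempty
subspace of a finite ultrametric space `X` with `|Sp(X)| = |X|` satisfies
`|Sp(Y)| = |Y|`. -/
theorem extremal_hereditary {X : Type*} [Fintype X] [DecidableEq X]
    (d : X → X → ℝ)
    (hnonneg : ∀ x y, 0 ≤ d x y)
    (hsymm : ∀ x y, d x y = d y x)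
    (hzero : ∀ x y, d x y = 0 ↔ x = y)
    (hultra : ∀ x y z, d x y ≤ max (d x z) (d z y))
    (hext : (Finset.univ.image (fun p : X × X => d p.1 p.2)).card = Fintype.card X)
    (Y : Finset X) (hY : Y.Nonempty) :
    ((Y ×ˢ Y).image (fun p => d p.1 p.2)).card = Y.card := by
  obtain ⟨y, hy⟩ := hY
  have hYne : Y.Nonempty := ⟨y, hy⟩
  -- upper bound : |Sp Y| ≤ |Y|
  have hupper : (spd d Y).card ≤ Y.card := by
    have hsing : ({y} : Finset X) ∪ Y.erase y = Y := by
      ext z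
      simp only [Finset.mem_union, Finset.mem_singleton, Finset.mem_erase]
      constructor
      · rintro (rfl | ⟨_, hz⟩); exact hy; exact hz
      · intro hz; by_cases hzy : z = y
        · exact Or.inl hzy
        · exact Or.inr ⟨hzy, hz⟩
    have := spd_acc d hsymm hzero hultra (Y.erase y) {y} ⟨y, Finset.mem_singleton_self y⟩
    rw [hsing] at this
    have hcard1 : (spd d {y}).card = 1 := by
      have : spd d {y} = {d y y} := by
        unfold spd
        rw [Finset.singleton_product_singleton, Finset.image_singleton]
      rw [this, Finset.card_singleton]
    rw [hcard1, Finset.card_erase_of_mem hy] at this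
    have hpos : 1 ≤ Y.card := Finset.card_pos.2 ⟨y, hy⟩
    omega
  -- lower bound : |Y| ≤ |Sp Y|
  have hlower : Y.card ≤ (spd d Y).card := by
    have hunion : Y ∪ (Finset.univ \ Y) = Finset.univ := by
      simp [Finset.union_sdiff_self_eq_union]
    have hacc := spd_acc d hsymm hzero hultra (Finset.univ \ Y) Y hYne
    rw [hunion] at hacc
    have hspuniv : (spd d (Finset.univ : Finset X)).card = Fintype.card X := by
      have : spd d (Finset.univ : Finset X)
          = Finset.univ.image (fun p : X × X => d p.1 p.2) := by
        unfold spd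
        congr 1
      rw [this, hext]
    rw [hspuniv, Finset.card_sdiff_of_subset (Finset.subset_univ Y), Finset.card_univ] at hacc
    have hle : Y.card ≤ Fintype.card X := Finset.card_le_univ Y
    omega
  exact le_antisymm hupper hlower
end
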